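/- arXiv:1210.5705 — 3 statements merged into one kernel-verified Lean document; each statement's English description precedes it below -/
import Mathlib

section
/- Let n ≥ 2 be an integer and α ∈ ℝ. For every radially symmetric function u : ℝⁿ → ℝ of class C² with compact support contained in ℝⁿ \ {0}, one has ∫_{ℝⁿ} |x|^α |Δu(x)|² dx ≥ ((n-α)/2)² ∫_{ℝⁿ} |x|^{α-2} |∇u(x)|² dx. -/
open MeasureTheory Real Set Filter Metric

noncomputable def lap {n : ℕ} (u : EuclideanSpace ℝ (Fin n) → ℝ)
    (x : EuclideanSpace ℝ (Fin n)) : ℝ :=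
  ∑ i : Fin n, iteratedFDeriv ℝ 2 u x ![EuclideanSpace.single i 1, EuclideanSpace.single i 1]

section aux
variable {E : Type*} [NormedAddCommGroup E] [InnerProductSpace ℝ E] [CompleteSpace E]

lemma hasFDerivAt_norm_ip {x : E} (hx : x ≠ 0) :
    HasFDerivAt (fun y : E => ‖y‖) (‖x‖⁻¹ • innerSL ℝ x) x := by
  have hn : ‖x‖ ≠ 0 := norm_ne_zero_iff.2 hx
  have h1 : HasFDerivAt (fun y : E => ‖y‖ ^ 2) (2 • innerSL ℝ x) x :=
    (hasStrictFDerivAt_norm_sq x).hasFDerivAt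
  have h2 := h1.sqrt (by positivity)
  have heq : (fun y : E => Real.sqrt (‖y‖ ^ 2)) = fun y : E => ‖y‖ := by
    funext y; exact Real.sqrt_sq (norm_nonneg y)
  rw [heq] at h2
  convert h2 using 1
  rw [Real.sqrt_sq (norm_nonneg x)]
  ext y
  simp only [ContinuousLinearMap.smul_apply, smul_eq_mul, ContinuousLinearMap.smul_apply,
    two_smul, ContinuousLinearMap.add_apply]
  field_simp
  ring

lemma radial_hasFDerivAt {u : E → ℝ} {g : ℝ → ℝ}
    (hg : Differentiable ℝ g)
    (hug : ∀ y : E, y ≠ 0 → u y = g ‖y‖)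
    {x : E} (hx : x ≠ 0) :
    HasFDerivAt u ((deriv g ‖x‖ * ‖x‖⁻¹) • innerSL ℝ x) x := by
  have hN := hasFDerivAt_norm_ip hx
  have hgd : HasDerivAt g (deriv g ‖x‖) ‖x‖ := (hg ‖x‖).hasDerivAt
  have h := hgd.comp_hasFDerivAt x hN
  have h2 : HasFDerivAt (g ∘ fun y : E => ‖y‖) ((deriv g ‖x‖ * ‖x‖⁻¹) • innerSL ℝ x) x := by
    rw [← smul_smul]
    exact h
  apply h2.congr_of_eventuallyEq
  filter_upwards [eventually_ne_nhds hx] with y hy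
  exact hug y hy

lemma radial_gradient {u : E → ℝ} {g : ℝ → ℝ}
    (hg : Differentiable ℝ g)
    (hug : ∀ y : E, y ≠ 0 → u y = g ‖y‖)
    {x : E} (hx : x ≠ 0) :
    ‖gradient u x‖ = |deriv g ‖x‖| := by
  have hrne : ‖x‖ ≠ 0 := (norm_pos_iff.2 hx).ne'
  have hG : HasGradientAt u ((deriv g ‖x‖ * ‖x‖⁻¹) • x) x := by
    rw [hasGradientAt_iff_hasFDerivAt]
    convert radial_hasFDerivAt hg hug hx using 1
    ext y
    simp [InnerProductSpace.toDual_apply_apply, real_inner_smul_left, innerSL_apply_apply]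
    ext y
    simp [InnerProductSpace.toDual_apply_apply, real_inner_smul_left, innerSL_apply_apply]
  rw [hG.gradient, norm_smul]
  simp only [norm_eq_abs, abs_mul, abs_inv, abs_norm]
  field_simp

end aux

lemma radial_lap {n : ℕ} {u : EuclideanSpace ℝ (Fin n) → ℝ} {g : ℝ → ℝ}
    (hg : ContDiff ℝ 2 g)
    (hug : ∀ y : EuclideanSpace ℝ (Fin n), y ≠ 0 → u y = g ‖y‖)
    {x : EuclideanSpace ℝ (Fin n)} (hx : x ≠ 0) :
    lap u x = deriv (deriv g) ‖x‖ + ((n : ℝ) - 1) * deriv g ‖x‖ / ‖x‖ := by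
  have h2 : (2 : WithTop ℕ∞) = 1 + 1 := by norm_num
  have hg' : Differentiable ℝ g ∧ ContDiff ℝ 1 (deriv g) := by
    rw [h2, contDiff_succ_iff_deriv] at hg
    exact ⟨hg.1, hg.2.2⟩
  have hgdiff : Differentiable ℝ g := hg'.1
  have hg1diff : Differentiable ℝ (deriv g) := hg'.2.differentiable one_ne_zero
  set r := ‖x‖ with hr
  have hrpos : 0 < r := norm_pos_iff.2 hx
  have hrne : r ≠ 0 := hrpos.ne'
  -- the scalar function ψ
  set ψ : ℝ → ℝ := fun s => deriv g s * s⁻¹ with hψ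
  have hψd : HasDerivAt ψ (deriv (deriv g) r * r⁻¹ + deriv g r * (-(r ^ 2)⁻¹)) r :=
    ((hg1diff r).hasDerivAt).mul (hasDerivAt_inv hrne)
  set ψ' : ℝ := deriv (deriv g) r * r⁻¹ + deriv g r * (-(r ^ 2)⁻¹) with hψ'
  -- Φ and its derivative
  set Φ : EuclideanSpace ℝ (Fin n) → (EuclideanSpace ℝ (Fin n) →L[ℝ] ℝ) :=
    fun y => (deriv g ‖y‖ * ‖y‖⁻¹) • innerSL ℝ y with hΦ
  have hcc : HasFDerivAt (fun y : EuclideanSpace ℝ (Fin n) => ψ ‖y‖)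
      (ψ' • (r⁻¹ • innerSL ℝ x)) x :=
    (by have h := hψd.comp_hasFDerivAt x (hasFDerivAt_norm_ip hx); exact h)
  set A : EuclideanSpace ℝ (Fin n) →L[ℝ] (EuclideanSpace ℝ (Fin n) →L[ℝ] ℝ) := innerSL ℝ with hA'
  have hA : HasFDerivAt (fun y : EuclideanSpace ℝ (Fin n) => A y) A x := A.hasFDerivAt
  have hΦd : HasFDerivAt Φ
      (ψ r • A + (ψ' • (r⁻¹ • innerSL ℝ x)).smulRight (A x)) x := hcc.smul hA
  -- fderiv u = Φ near x
  have hev : fderiv ℝ u =ᶠ[nhds x] Φ := by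
    filter_upwards [eventually_ne_nhds hx] with y hy
    exact (radial_hasFDerivAt hgdiff hug hy).fderiv
  have hfd2 : fderiv ℝ (fderiv ℝ u) x = fderiv ℝ Φ x := hev.fderiv_eq
  have hΦfd : fderiv ℝ Φ x = ψ r • A + (ψ' • (r⁻¹ • innerSL ℝ x)).smulRight (A x) := hΦd.fderiv
  -- evaluate
  have key : ∀ i : Fin n,
      iteratedFDeriv ℝ 2 u x ![EuclideanSpace.single i 1, EuclideanSpace.single i 1]
        = ψ r * 1 + ψ' * r⁻¹ * (x i * x i) := by
    intro i
    rw [iteratedFDeriv_two_apply, hfd2, hΦfd]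
    simp only [Matrix.cons_val_zero, Matrix.cons_val_one, Matrix.head_cons,
      ContinuousLinearMap.add_apply, ContinuousLinearMap.smul_apply,
      ContinuousLinearMap.smulRight_apply, smul_eq_mul]
    have h1 : (innerSL ℝ (EuclideanSpace.single i (1:ℝ))) (EuclideanSpace.single i (1:ℝ)) = 1 := by
      simp [innerSL_apply_apply, EuclideanSpace.inner_single_left]
    have h2 : (innerSL ℝ x) (EuclideanSpace.single i (1:ℝ)) = x i := by
      simp [innerSL_apply_apply, EuclideanSpace.inner_single_right]
    rw [h1, h2]
    ring
  have hsum : lap u x = (n : ℝ) * (ψ r) + ψ' * r⁻¹ * (r ^ 2) := by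
    rw [lap]
    simp only [key]
    rw [Finset.sum_add_distrib, Finset.sum_const, Finset.card_univ, Fintype.card_fin]
    have : ∑ i : Fin n, ψ' * r⁻¹ * (x i * x i) = ψ' * r⁻¹ * ∑ i : Fin n, (x i * x i) := by
      rw [Finset.mul_sum]
    rw [this]
    have hxx : ∑ i : Fin n, (x i * x i) = r ^ 2 := by
      have := @real_inner_self_eq_norm_sq (EuclideanSpace ℝ (Fin n)) _ _ x
      rw [← this, PiLp.inner_apply]
      simp [RCLike.inner_apply, sq]
    rw [hxx]
    push_cast
    ring
  rw [hsum, hψ, hψ']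
  field_simp
  ring

lemma vanish_integrableOn {f : ℝ → ℝ} {a b : ℝ} (ha : 0 < a) (hab : a ≤ b)
    (hc : ContinuousOn f (Ioi 0)) (h0 : ∀ r ∈ Ioi (0:ℝ) \ Ioc a b, f r = 0) :
    IntegrableOn f (Ioi (0:ℝ)) ∧ ∫ r in Ioi (0:ℝ), f r = ∫ r in Ioc a b, f r := by
  have hsub : Icc a b ⊆ Ioi (0:ℝ) := fun r hr => lt_of_lt_of_le ha hr.1
  have hIcc : IntegrableOn f (Icc a b) := (hc.mono hsub).integrableOn_Icc
  have hIoc : IntegrableOn f (Ioc a b) := hIcc.mono_set Ioc_subset_Icc_self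
  have hmeas : MeasurableSet (Ioi (0:ℝ) \ Ioc a b) := measurableSet_Ioi.diff measurableSet_Ioc
  have hdiff : IntegrableOn f (Ioi (0:ℝ) \ Ioc a b) := by
    apply (integrableOn_zero (μ := volume)).congr_fun (fun r hr => (h0 r hr).symm) hmeas
  have hunion : Ioi (0:ℝ) = Ioc a b ∪ (Ioi (0:ℝ) \ Ioc a b) := by
    rw [union_diff_cancel]
    · intro r hr; exact lt_trans ha hr.1
  have hdisj : Disjoint (Ioc a b) (Ioi (0:ℝ) \ Ioc a b) := disjoint_sdiff_right
  constructor
  · rw [hunion]; exact hIoc.union hdiff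
  · rw [hunion, setIntegral_union hdisj hmeas hIoc hdiff]
    have : ∫ r in Ioi (0:ℝ) \ Ioc a b, f r = 0 := by
      apply setIntegral_eq_zero_of_forall_eq_zero h0
    rw [this, add_zero]

lemma integral_deriv_vanish {φ D : ℝ → ℝ} {a b : ℝ} (ha : 0 < a) (hab : a ≤ b)
    (hd : ∀ r : ℝ, 0 < r → HasDerivAt φ (D r) r)
    (hc : ContinuousOn D (Ioi 0)) (h0 : ∀ r ∈ Ioi (0:ℝ) \ Ioc a b, D r = 0)
    (hφa : φ a = 0) (hφb : φ b = 0) :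
    ∫ r in Ioi (0:ℝ), D r = 0 := by
  rw [(vanish_integrableOn ha hab hc h0).2, ← intervalIntegral.integral_of_le hab]
  have huIcc : uIcc a b = Icc a b := uIcc_of_le hab
  have := intervalIntegral.integral_eq_sub_of_hasDerivAt
    (f := φ) (f' := D) (a := a) (b := b)
    (fun x hx => hd x (lt_of_lt_of_le ha (by rw [huIcc] at hx; exact hx.1)))
    ((hc.mono (by rw [huIcc]; exact fun r hr => lt_of_lt_of_le ha hr.1)).intervalIntegrable)
  rw [this, hφa, hφb, sub_zero]

lemma oneD (n : ℕ) (hn : 2 ≤ n) (α : ℝ) (g1 g2 : ℝ → ℝ)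
    (hg1 : Continuous g1) (hg2 : Continuous g2)
    (hd : ∀ r : ℝ, HasDerivAt g1 (g2 r) r)
    {a b : ℝ} (ha : 0 < a) (hab : a ≤ b)
    (hvan : ∀ r : ℝ, 0 < r → (r ≤ a ∨ b ≤ r) → g1 r = 0 ∧ g2 r = 0) :
    ∫ r in Ioi (0:ℝ), r ^ (n - 1 : ℕ) * (r ^ α * (g2 r + ((n:ℝ) - 1) * g1 r / r) ^ 2)
      ≥ (((n:ℝ) - α) / 2) ^ 2 *
        ∫ r in Ioi (0:ℝ), r ^ (n - 1 : ℕ) * (r ^ (α - 2) * (g1 r) ^ 2) := by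
  set β : ℝ := α + n - 1 with hβ
  set m : ℝ := (β - 1) / 2 with hm
  set K : ℝ := (((n:ℝ) - α) / 2) ^ 2 with hK
  set L : ℝ → ℝ := fun r => r ^ (n - 1 : ℕ) * (r ^ α * (g2 r + ((n:ℝ) - 1) * g1 r / r) ^ 2)
    with hL
  set R : ℝ → ℝ := fun r => r ^ (n - 1 : ℕ) * (r ^ (α - 2) * (g1 r) ^ 2) with hR
  set S : ℝ → ℝ := fun r => (r ^ (β/2) * g2 r + m * r ^ (β/2 - 1) * g1 r) ^ 2 with hS
  set D : ℝ → ℝ := fun r =>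
    ((n:ℝ) - 1 - m) * ((β - 1) * r ^ (β - 1 - 1) * (g1 r) ^ 2 + r ^ (β - 1) * (2 * g1 r * g2 r))
    with hD
  set φ : ℝ → ℝ := fun r => ((n:ℝ) - 1 - m) * (r ^ (β - 1) * (g1 r) ^ 2) with hφ
  -- pointwise identity
  have hid : ∀ r ∈ Ioi (0:ℝ), L r - K * R r = S r + D r := by
    intro r hr
    have hr : (0:ℝ) < r := hr
    set p : ℝ := r ^ ((β - 2)/2) with hp
    have hpp : p * p = r ^ (β - 2) := by rw [← Real.rpow_add hr]; congr 1; ring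
    have h1 : r ^ (β/2) = p * r := by
      rw [show β/2 = (β-2)/2 + 1 by ring, Real.rpow_add hr, Real.rpow_one, ← hp]
    have h2 : r ^ (β/2 - 1) = p := by rw [hp]; congr 1; ring
    have h3 : r ^ (β - 1) = p * p * r := by
      rw [show β - 1 = (β-2) + 1 by ring, Real.rpow_add hr, Real.rpow_one, ← hpp]
    have h4 : r ^ (β - 1 - 1) = p * p := by rw [hpp]; congr 1; ring
    have hnpow : (r : ℝ) ^ (n - 1 : ℕ) = r ^ ((n:ℝ) - 1) := by
      rw [← Real.rpow_natCast r (n - 1), Nat.cast_sub (by omega), Nat.cast_one]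
    have h5 : r ^ ((n:ℝ) - 1) * r ^ α = p * p * (r * r) := by
      rw [← Real.rpow_add hr]
      rw [show (n:ℝ) - 1 + α = (β - 2) + 2 by rw [hβ]; ring]
      rw [Real.rpow_add hr, ← hpp]
      congr 1
      rw [show (2:ℝ) = ((2:ℕ):ℝ) by norm_num, Real.rpow_natCast]
      ring
    have h6 : r ^ ((n:ℝ) - 1) * r ^ (α - 2) = p * p := by
      rw [← Real.rpow_add hr]
      rw [show (n:ℝ) - 1 + (α - 2) = β - 2 by rw [hβ]; ring]
      exact hpp.symm
    rw [hL, hR, hS, hD]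
    simp only
    rw [hnpow, mul_assoc, ← mul_assoc (r ^ ((n:ℝ)-1)), h5,
      show r ^ ((n:ℝ)-1) * (r ^ (α-2) * g1 r ^ 2) = (r ^ ((n:ℝ)-1) * r ^ (α-2)) * g1 r ^ 2 by ring,
      h6, h1, h2, h3, h4, hm, hK, hβ]
    have hrne : r ≠ 0 := hr.ne'
    field_simp
    ring
  -- continuity helpers
  have hrpow : ∀ c : ℝ, ContinuousOn (fun r : ℝ => r ^ c) (Ioi (0:ℝ)) := fun c r hr =>
    (Real.continuousAt_rpow_const r c (Or.inl (ne_of_gt hr))).continuousWithinAt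
  have hne : ∀ r ∈ Ioi (0:ℝ), r ≠ 0 := fun r hr => ne_of_gt hr
  have hLc : ContinuousOn L (Ioi (0:ℝ)) := by
    apply ((continuous_pow (n-1)).continuousOn).mul
    apply (hrpow α).mul
    exact ((hg2.continuousOn.add ((continuous_const.mul hg1).continuousOn.div
      continuousOn_id hne)).pow 2)
  have hRc : ContinuousOn R (Ioi (0:ℝ)) := by
    apply ((continuous_pow (n-1)).continuousOn).mul
    exact (hrpow (α-2)).mul ((hg1.continuousOn).pow 2)
  have hSc : ContinuousOn S (Ioi (0:ℝ)) := by
    apply ContinuousOn.pow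
    exact ((hrpow (β/2)).mul hg2.continuousOn).add
      ((continuous_const.continuousOn.mul (hrpow (β/2-1))).mul hg1.continuousOn)
  have hDc : ContinuousOn D (Ioi (0:ℝ)) := by
    apply continuous_const.continuousOn.mul
    exact (((continuous_const.continuousOn.mul (hrpow (β-1-1))).mul
      ((hg1.continuousOn).pow 2)).add ((hrpow (β-1)).mul
      (((continuous_const.mul hg1).mul hg2).continuousOn)))
  -- vanishing helpers
  have hnotIoc : ∀ r : ℝ, r ∈ Ioi (0:ℝ) \ Ioc a b → g1 r = 0 ∧ g2 r = 0 := by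
    intro r hr
    rcases hr with ⟨hr1, hr2⟩
    rw [mem_Ioc, not_and_or] at hr2
    rcases hr2 with h | h
    · exact hvan r hr1 (Or.inl (le_of_not_gt h))
    · exact hvan r hr1 (Or.inr (le_of_not_ge h))
  have hvanL : ∀ r ∈ Ioi (0:ℝ) \ Ioc a b, L r = 0 := by
    intro r hr; obtain ⟨e1, e2⟩ := hnotIoc r hr; simp [hL, e1, e2]
  have hvanR : ∀ r ∈ Ioi (0:ℝ) \ Ioc a b, R r = 0 := by
    intro r hr; obtain ⟨e1, e2⟩ := hnotIoc r hr; simp [hR, e1]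
  have hvanS : ∀ r ∈ Ioi (0:ℝ) \ Ioc a b, S r = 0 := by
    intro r hr; obtain ⟨e1, e2⟩ := hnotIoc r hr; simp [hS, e1, e2]
  have hvanD : ∀ r ∈ Ioi (0:ℝ) \ Ioc a b, D r = 0 := by
    intro r hr; obtain ⟨e1, e2⟩ := hnotIoc r hr; simp [hD, e1]
  obtain ⟨hLint, -⟩ := vanish_integrableOn ha hab hLc hvanL
  obtain ⟨hRint, -⟩ := vanish_integrableOn ha hab hRc hvanR
  obtain ⟨hSint, -⟩ := vanish_integrableOn ha hab hSc hvanS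
  obtain ⟨hDint, -⟩ := vanish_integrableOn ha hab hDc hvanD
  -- ∫ D = 0
  have hdφ : ∀ r : ℝ, 0 < r → HasDerivAt φ (D r) r := by
    intro r hr
    have hA : HasDerivAt (fun s : ℝ => s ^ (β-1)) ((β-1) * r ^ (β-1-1)) r :=
      Real.hasDerivAt_rpow_const (Or.inl hr.ne')
    have hB : HasDerivAt (fun s : ℝ => (g1 s) ^ 2) (2 * g1 r * g2 r) r := by
      have := (hd r).fun_pow 2
      simpa using this
    have := (hA.fun_mul hB).const_mul ((n:ℝ) - 1 - m)
    convert this using 1 <;> (try rw [hD]) <;> (try ring)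
  have hφa : φ a = 0 := by
    obtain ⟨e1, -⟩ := hvan a ha (Or.inl le_rfl); simp [hφ, e1]
  have hφb : φ b = 0 := by
    obtain ⟨e1, -⟩ := hvan b (lt_of_lt_of_le ha hab) (Or.inr le_rfl); simp [hφ, e1]
  have hDzero : ∫ r in Ioi (0:ℝ), D r = 0 :=
    integral_deriv_vanish ha hab hdφ hDc hvanD hφa hφb
  -- combine
  have key : (∫ r in Ioi (0:ℝ), L r) - K * ∫ r in Ioi (0:ℝ), R r
      = (∫ r in Ioi (0:ℝ), S r) + ∫ r in Ioi (0:ℝ), D r := by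
    rw [← MeasureTheory.integral_const_mul, ← MeasureTheory.integral_sub hLint (hRint.const_mul K),
      ← MeasureTheory.integral_add hSint hDint]
    exact setIntegral_congr_fun measurableSet_Ioi (fun r hr => hid r hr)
  have hS0 : 0 ≤ ∫ r in Ioi (0:ℝ), S r :=
    setIntegral_nonneg measurableSet_Ioi (fun r _ => sq_nonneg _)
  have : (∫ r in Ioi (0:ℝ), L r) ≥ K * ∫ r in Ioi (0:ℝ), R r := by
    rw [hDzero, add_zero] at key
    linarith
  exact this

theorem statement1 (n : ℕ) (hn : 2 ≤ n) (α : ℝ)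
    (u : EuclideanSpace ℝ (Fin n) → ℝ)
    (hu : ContDiff ℝ 2 u) (hcs : HasCompactSupport u)
    (h0 : (0 : EuclideanSpace ℝ (Fin n)) ∉ tsupport u)
    (hrad : ∃ f : ℝ → ℝ, ∀ x : EuclideanSpace ℝ (Fin n), x ≠ 0 → u x = f ‖x‖) :
    (∫ x : EuclideanSpace ℝ (Fin n), ‖x‖ ^ α * (lap u x) ^ 2) ≥
      (((n : ℝ) - α) / 2) ^ 2 *
        (∫ x : EuclideanSpace ℝ (Fin n), ‖x‖ ^ (α - 2) * ‖gradient u x‖ ^ 2) := by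
  classical
  obtain ⟨f, hf⟩ := hrad
  have hn0 : 0 < n := by omega
  let i0 : Fin n := ⟨0, hn0⟩
  set e : EuclideanSpace ℝ (Fin n) := EuclideanSpace.single i0 1 with he
  have hee : ‖e‖ = 1 := by rw [he, EuclideanSpace.norm_single]; norm_num
  have hene : e ≠ 0 := by
    intro hcon
    rw [hcon] at hee; simp at hee
  haveI : Nontrivial (EuclideanSpace ℝ (Fin n)) := ⟨⟨e, 0, hene⟩⟩
  set g : ℝ → ℝ := fun r => u (r • e) with hgdef
  have hg : ContDiff ℝ 2 g := hu.comp ((contDiff_id (E := ℝ)).smul contDiff_const)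
  have hug : ∀ y : EuclideanSpace ℝ (Fin n), y ≠ 0 → u y = g ‖y‖ := by
    intro y hy
    have hny : (0:ℝ) < ‖y‖ := norm_pos_iff.2 hy
    have h2 : (‖y‖ : ℝ) • e ≠ 0 := smul_ne_zero hny.ne' hene
    have h3 : u (‖y‖ • e) = f ‖(‖y‖:ℝ) • e‖ := hf _ h2
    rw [norm_smul, hee, mul_one, Real.norm_eq_abs, abs_of_pos hny] at h3
    rw [hf y hy, hgdef]
    exact h3.symm
  -- first and second derivatives of g
  have h2eq : (2 : WithTop ℕ∞) = 1 + 1 := by norm_num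
  have hgsplit : Differentiable ℝ g ∧ ContDiff ℝ 1 (deriv g) := by
    rw [h2eq, contDiff_succ_iff_deriv] at hg
    exact ⟨hg.1, hg.2.2⟩
  have hgdiff : Differentiable ℝ g := hgsplit.1
  set g1 : ℝ → ℝ := deriv g with hg1def
  set g2 : ℝ → ℝ := deriv g1 with hg2def
  have hg1cd : ContDiff ℝ 1 g1 := hgsplit.2
  have hg1diff : Differentiable ℝ g1 := (contDiff_one_iff_deriv.mp hg1cd).1
  have hg1c : Continuous g1 := hg1cd.continuous
  have hg2c : Continuous g2 := (contDiff_one_iff_deriv.mp hg1cd).2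
  -- support bounds
  obtain ⟨ε, hε, hball⟩ : ∃ ε > 0, ball (0:EuclideanSpace ℝ (Fin n)) ε ⊆ (tsupport u)ᶜ := by
    have hmem : (tsupport u)ᶜ ∈ nhds (0:EuclideanSpace ℝ (Fin n)) :=
      (isClosed_tsupport u).isOpen_compl.mem_nhds h0
    exact Metric.mem_nhds_iff.mp hmem
  obtain ⟨R0, hR0⟩ : ∃ R0 : ℝ, tsupport u ⊆ closedBall 0 R0 :=
    hcs.isBounded.subset_closedBall 0
  set R : ℝ := max R0 0 with hRdef
  have hRsub : tsupport u ⊆ closedBall (0:EuclideanSpace ℝ (Fin n)) R :=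
    hR0.trans (closedBall_subset_closedBall (le_max_left _ _))
  set a : ℝ := min (ε/2) 1 with hadef
  set b : ℝ := R + 1 with hbdef
  have ha : 0 < a := lt_min (by linarith) one_pos
  have hRnn : (0:ℝ) ≤ R := le_max_right _ _
  have hab : a ≤ b := le_trans (min_le_right _ _) (by rw [hbdef]; linarith)
  -- vanishing of g near 0 and at infinity, as open conditions
  set P : ℝ → Prop := fun r => |r| < ε ∨ R < |r| with hP
  have hPopen : IsOpen {r : ℝ | P r} :=
    (isOpen_lt continuous_abs continuous_const).union
      (isOpen_lt continuous_const continuous_abs)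
  have hgzero : ∀ r : ℝ, P r → g r = 0 := by
    intro r hr
    have hnorm : ‖r • e‖ = |r| := by rw [norm_smul, hee, mul_one, Real.norm_eq_abs]
    have hnot : r • e ∉ tsupport u := by
      rcases hr with h | h
      · intro hmem
        exact (hball (by rw [mem_ball, dist_zero_right, hnorm]; exact h)) hmem
      · intro hmem
        have := hRsub hmem
        rw [mem_closedBall, dist_zero_right, hnorm] at this
        linarith
    rw [hgdef]
    exact image_eq_zero_of_notMem_tsupport hnot
  have hg1zero : ∀ r : ℝ, P r → g1 r = 0 := by
    intro r hr
    have hev : g =ᶠ[nhds r] (fun _ => 0) := by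
      filter_upwards [hPopen.mem_nhds hr] with s hs
      exact hgzero s hs
    rw [hg1def, hev.deriv_eq, deriv_const]
  have hg2zero : ∀ r : ℝ, P r → g2 r = 0 := by
    intro r hr
    have hev : g1 =ᶠ[nhds r] (fun _ => 0) := by
      filter_upwards [hPopen.mem_nhds hr] with s hs
      exact hg1zero s hs
    rw [hg2def, hev.deriv_eq, deriv_const]
  have hvan : ∀ r : ℝ, 0 < r → (r ≤ a ∨ b ≤ r) → g1 r = 0 ∧ g2 r = 0 := by
    intro r hrpos hr
    have hPr : P r := by
      rcases hr with h | h
      · left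
        rw [abs_of_pos hrpos]
        calc r ≤ a := h
          _ ≤ ε/2 := min_le_left _ _
          _ < ε := by linarith
      · right
        rw [abs_of_pos hrpos]
        rw [hbdef] at h; linarith
    exact ⟨hg1zero r hPr, hg2zero r hPr⟩
  -- u vanishes near 0
  have huev : ∀ y : EuclideanSpace ℝ (Fin n), y ∈ ball (0:EuclideanSpace ℝ (Fin n)) ε → u =ᶠ[nhds y] (fun _ => 0) := by
    intro y hy
    filter_upwards [isOpen_ball.mem_nhds hy] with z hz
    exact image_eq_zero_of_notMem_tsupport (fun hmem => (hball hz) hmem)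
  have hfderiv0 : fderiv ℝ u =ᶠ[nhds (0:EuclideanSpace ℝ (Fin n))] (fun _ => 0) := by
    filter_upwards [isOpen_ball.mem_nhds (mem_ball_self hε)] with y hy
    rw [(huev y hy).fderiv_eq]
    exact fderiv_const_apply 0
  have hlap0 : lap u 0 = 0 := by
    rw [lap]
    apply Finset.sum_eq_zero
    intro i _
    rw [iteratedFDeriv_two_apply, hfderiv0.fderiv_eq, fderiv_const_apply 0]
    simp
  have hgrad0 : gradient u 0 = 0 := by
    rw [gradient, hfderiv0.self_of_nhds]
    simp
  -- the radial profiles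
  set F : ℝ → ℝ := fun r => r ^ α * (g2 r + ((n:ℝ) - 1) * g1 r / r) ^ 2 with hFdef
  set G : ℝ → ℝ := fun r => r ^ (α - 2) * (g1 r) ^ 2 with hGdef
  have hg1z0 : g1 0 = 0 := hg1zero 0 (by left; simpa using hε)
  have hg2z0 : g2 0 = 0 := hg2zero 0 (by left; simpa using hε)
  have hFx : ∀ x : EuclideanSpace ℝ (Fin n), ‖x‖ ^ α * (lap u x) ^ 2 = F ‖x‖ := by
    intro x
    by_cases hx : x = 0
    · rw [hx, hlap0, hFdef]
      simp [hg1z0, hg2z0]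
    · rw [radial_lap hg hug hx, hFdef]
  have hGx : ∀ x : EuclideanSpace ℝ (Fin n), ‖x‖ ^ (α - 2) * ‖gradient u x‖ ^ 2 = G ‖x‖ := by
    intro x
    by_cases hx : x = 0
    · rw [hx, hgrad0, hGdef]
      simp [hg1z0]
    · rw [radial_gradient hgdiff hug hx, hGdef, sq_abs]
  -- polar coordinates
  have e1 : ∫ x : EuclideanSpace ℝ (Fin n), ‖x‖ ^ α * (lap u x) ^ 2 = ∫ x : EuclideanSpace ℝ (Fin n), F ‖x‖ :=
    integral_congr_ae (ae_of_all _ hFx)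
  have e2 : ∫ x : EuclideanSpace ℝ (Fin n), ‖x‖ ^ (α - 2) * ‖gradient u x‖ ^ 2 = ∫ x : EuclideanSpace ℝ (Fin n), G ‖x‖ :=
    integral_congr_ae (ae_of_all _ hGx)
  have hdim : Module.finrank ℝ (EuclideanSpace ℝ (Fin n)) = n := finrank_euclideanSpace_fin
  have p1 := integral_fun_norm_addHaar (volume : Measure (EuclideanSpace ℝ (Fin n))) F
  have p2 := integral_fun_norm_addHaar (volume : Measure (EuclideanSpace ℝ (Fin n))) G
  rw [hdim] at p1 p2
  set c : ℝ := (n : ℝ) * (volume (ball (0:EuclideanSpace ℝ (Fin n)) 1)).toReal with hcdef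
  have hc : 0 ≤ c := by positivity
  have p1' : ∫ x : EuclideanSpace ℝ (Fin n), F ‖x‖ = c * ∫ r in Ioi (0:ℝ), r ^ (n - 1 : ℕ) * F r := by
    rw [p1, nsmul_eq_mul, smul_eq_mul, hcdef, mul_assoc]
    rfl
  have p2' : ∫ x : EuclideanSpace ℝ (Fin n), G ‖x‖ = c * ∫ r in Ioi (0:ℝ), r ^ (n - 1 : ℕ) * G r := by
    rw [p2, nsmul_eq_mul, smul_eq_mul, hcdef, mul_assoc]
    rfl
  -- 1D inequality
  have hd : ∀ r : ℝ, HasDerivAt g1 (g2 r) r := fun r => (hg1diff r).hasDerivAt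
  have h1d := oneD n hn α g1 g2 hg1c hg2c hd ha hab hvan
  rw [ge_iff_le, e1, e2, p1', p2']
  calc (((n:ℝ) - α) / 2) ^ 2 * (c * ∫ r in Ioi (0:ℝ), r ^ (n - 1 : ℕ) * G r)
      = c * ((((n:ℝ) - α) / 2) ^ 2 * ∫ r in Ioi (0:ℝ), r ^ (n - 1 : ℕ) * G r) := by ring
    _ ≤ c * ∫ r in Ioi (0:ℝ), r ^ (n - 1 : ℕ) * F r := by
        apply mul_le_mul_of_nonneg_left _ hc
        exact h1d
end

section
/- Let A, B, C ∈ ℝ with C > 0 and A² + 2B > B²/C. Then for every function g : ℝ → ℝ of class C² with compact support, ∫_ℝ |g''(s) + A g'(s) - B g(s)|² ds ≥ (B²/C) ( ∫_ℝ |g'(s)|² ds + C ∫_ℝ |g(s)|² ds ). -/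
open MeasureTheory

theorem statement15 (A B C : ℝ) (hC : 0 < C) (hABC : A ^ 2 + 2 * B > B ^ 2 / C)
    (g : ℝ → ℝ) (hg : ContDiff ℝ 2 g) (hcs : HasCompactSupport g) :
    (∫ s : ℝ, (deriv (deriv g) s + A * deriv g s - B * g s) ^ 2) ≥
      B ^ 2 / C * ((∫ s : ℝ, (deriv g s) ^ 2) + C * ∫ s : ℝ, (g s) ^ 2) := by
  have hg1 : ContDiff ℝ 1 g := hg.of_le (by norm_num)
  have hgd : ContDiff ℝ 1 (deriv g) :=
    (contDiff_succ_iff_deriv.mp (show ContDiff ℝ (1 + 1) g by norm_num; exact hg)).2.2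
  have cg : Continuous g := hg.continuous
  have cg1 : Continuous (deriv g) := hgd.continuous
  have cg2 : Continuous (deriv (deriv g)) := hgd.continuous_deriv le_rfl
  have hcs1 : HasCompactSupport (deriv g) := hcs.deriv
  have hcs2 : HasCompactSupport (deriv (deriv g)) := hcs1.deriv
  have hd1 : ∀ x, HasDerivAt g (deriv g x) x :=
    fun x => (hg1.differentiable one_ne_zero x).hasDerivAt
  have hd2 : ∀ x, HasDerivAt (deriv g) (deriv (deriv g) x) x :=
    fun x => (hgd.differentiable one_ne_zero x).hasDerivAt
  -- integrability of products
  have imul : ∀ (u v : ℝ → ℝ), Continuous u → Continuous v → HasCompactSupport u →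
      Integrable (fun s => u s * v s) := fun u v cu cv hu =>
    (cu.mul cv).integrable_of_hasCompactSupport (hu.mul_right)
  have i00 := imul g g cg cg hcs
  have i01 := imul g (deriv g) cg cg1 hcs
  have i02 := imul g (deriv (deriv g)) cg cg2 hcs
  have i11 := imul (deriv g) (deriv g) cg1 cg1 hcs1
  have i12 := imul (deriv g) (deriv (deriv g)) cg1 cg2 hcs1
  have i22 := imul (deriv (deriv g)) (deriv (deriv g)) cg2 cg2 hcs2
  have i10 := imul (deriv g) g cg1 cg hcs1
  have i20 := imul (deriv (deriv g)) g cg2 cg hcs2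
  have i21 := imul (deriv (deriv g)) (deriv g) cg2 cg1 hcs2
  -- integration by parts identities
  have E1 : (∫ s : ℝ, g s * deriv g s) = 0 := by
    have := integral_mul_deriv_eq_deriv_mul_of_integrable (fun x _ => hd1 x) (fun x _ => hd1 x) i01 i10 i00
    have hcomm : (∫ s : ℝ, deriv g s * g s) = ∫ s : ℝ, g s * deriv g s := by
      congr 1; ext s; ring
    rw [hcomm] at this; linarith
  have E2 : (∫ s : ℝ, deriv g s * deriv (deriv g) s) = 0 := by
    have := integral_mul_deriv_eq_deriv_mul_of_integrable (fun x _ => hd2 x) (fun x _ => hd2 x) i12 i21 i11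
    have hcomm : (∫ s : ℝ, deriv (deriv g) s * deriv g s)
        = ∫ s : ℝ, deriv g s * deriv (deriv g) s := by
      congr 1; ext s; ring
    rw [hcomm] at this; linarith
  have E3 : (∫ s : ℝ, g s * deriv (deriv g) s) = - ∫ s : ℝ, deriv g s * deriv g s :=
    integral_mul_deriv_eq_deriv_mul_of_integrable (fun x _ => hd1 x) (fun x _ => hd2 x) i02 i11 i01
  -- expansion
  have expand : (fun s => (deriv (deriv g) s + A * deriv g s - B * g s) ^ 2)
      = fun s => deriv (deriv g) s * deriv (deriv g) s
        + (A ^ 2 * (deriv g s * deriv g s)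
        + (B ^ 2 * (g s * g s)
        + ((2 * A) * (deriv g s * deriv (deriv g) s)
        + ((-(2 * B)) * (g s * deriv (deriv g) s)
        + (-(2 * A * B)) * (g s * deriv g s))))) := by
    funext s; ring
  have hL : (∫ s : ℝ, (deriv (deriv g) s + A * deriv g s - B * g s) ^ 2)
      = (∫ s : ℝ, deriv (deriv g) s * deriv (deriv g) s)
        + (A ^ 2 * (∫ s : ℝ, deriv g s * deriv g s)
        + (B ^ 2 * (∫ s : ℝ, g s * g s)
        + ((2 * A) * (∫ s : ℝ, deriv g s * deriv (deriv g) s)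
        + ((-(2 * B)) * (∫ s : ℝ, g s * deriv (deriv g) s)
        + (-(2 * A * B)) * (∫ s : ℝ, g s * deriv g s))))) := by
    have j5 : Integrable (fun s => (-(2 * A * B)) * (g s * deriv g s)) := i01.const_mul _
    have j4 : Integrable (fun s => (-(2 * B)) * (g s * deriv (deriv g) s)
        + (-(2 * A * B)) * (g s * deriv g s)) := (i02.const_mul _).add j5
    have j3 : Integrable (fun s => (2 * A) * (deriv g s * deriv (deriv g) s)
        + ((-(2 * B)) * (g s * deriv (deriv g) s)
        + (-(2 * A * B)) * (g s * deriv g s))) := (i12.const_mul _).add j4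
    have j2 : Integrable (fun s => B ^ 2 * (g s * g s)
        + ((2 * A) * (deriv g s * deriv (deriv g) s)
        + ((-(2 * B)) * (g s * deriv (deriv g) s)
        + (-(2 * A * B)) * (g s * deriv g s)))) := (i00.const_mul _).add j3
    have j1 : Integrable (fun s => A ^ 2 * (deriv g s * deriv g s)
        + (B ^ 2 * (g s * g s)
        + ((2 * A) * (deriv g s * deriv (deriv g) s)
        + ((-(2 * B)) * (g s * deriv (deriv g) s)
        + (-(2 * A * B)) * (g s * deriv g s))))) := (i11.const_mul _).add j2
    rw [expand, integral_add i22 j1, integral_add (i11.const_mul _) j2,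
      integral_add (i00.const_mul _) j3, integral_add (i12.const_mul _) j4,
      integral_add (i02.const_mul _) j5,
      integral_const_mul, integral_const_mul, integral_const_mul, integral_const_mul,
      integral_const_mul]
  rw [hL, E1, E2, E3]
  have hsq : ∀ h : ℝ → ℝ, (∫ s : ℝ, (h s) ^ 2) = ∫ s : ℝ, h s * h s := by
    intro h; congr 1; funext s; ring
  rw [hsq, hsq]
  have n0 : 0 ≤ ∫ s : ℝ, g s * g s := integral_nonneg fun s => mul_self_nonneg _
  have n1 : 0 ≤ ∫ s : ℝ, deriv g s * deriv g s := integral_nonneg fun s => mul_self_nonneg _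
  have n2 : 0 ≤ ∫ s : ℝ, deriv (deriv g) s * deriv (deriv g) s :=
    integral_nonneg fun s => mul_self_nonneg _
  have hBC : B ^ 2 / C * C = B ^ 2 := div_mul_cancel₀ _ hC.ne'
  nlinarith [mul_le_mul_of_nonneg_right (le_of_lt hABC) n1]
end

section
/- Let A, B, C ∈ ℝ with C > 0. Then for every ε > 0 there exists a function g : ℝ → ℝ of class C² with compact support such that ∫_ℝ |g'(s)|² ds + C ∫_ℝ |g(s)|² ds ≠ 0 and ∫_ℝ |g''(s) + A g'(s) - B g(s)|² ds < (B²/C + ε) ( ∫_ℝ |g'(s)|² ds + C ∫_ℝ |g(s)|² ds ). (That is, the infimum of the corresponding one-dimensional Rayleigh quotient is at most B²/C; it is attained in the limit by the rescalings g(s) = g₀(εs) as ε → 0.) -/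
open MeasureTheory
open scoped ContDiff

private lemma aux_deriv_scale (f : ℝ → ℝ) (hf : Differentiable ℝ f) (c : ℝ) :
    deriv (fun x => f (c * x)) = fun x => c * deriv f (c * x) := by
  funext x
  have h1 : HasDerivAt (fun x : ℝ => c * x) c x := by
    simpa using (hasDerivAt_id x).const_mul c
  have h2 : HasDerivAt f (deriv f (c * x)) (c * x) := (hf (c * x)).hasDerivAt
  have h3 : HasDerivAt (fun x => f (c * x)) (deriv f (c * x) * c) x := h2.comp x h1
  rw [h3.deriv]; ring

private lemma aux_sq_ineq (t u₁ u₂ v : ℝ) (ht : 0 < t) :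
    (u₁ + u₂ - v) ^ 2 ≤ (1 + t) * v ^ 2 + 2 * (1 + 1 / t) * (u₁ ^ 2 + u₂ ^ 2) := by
  have h1 : (u₁ + u₂ - v) ^ 2 ≤ (1 + t) * v ^ 2 + (1 + 1 / t) * (u₁ + u₂) ^ 2 := by
    have hw : (1 + t) * v ^ 2 + (1 + 1 / t) * (u₁ + u₂) ^ 2 - (u₁ + u₂ - v) ^ 2
        = (t * v + (u₁ + u₂)) ^ 2 / t := by field_simp; ring
    linarith [div_nonneg (sq_nonneg (t * v + (u₁ + u₂))) ht.le, hw]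
  have h2 : (u₁ + u₂) ^ 2 ≤ 2 * (u₁ ^ 2 + u₂ ^ 2) := by nlinarith [sq_nonneg (u₁ - u₂)]
  have h3 : (0:ℝ) < 1 + 1 / t := by positivity
  nlinarith [mul_le_mul_of_nonneg_left h2 h3.le]

set_option maxHeartbeats 1000000 in
theorem statement17 (A B C : ℝ) (hC : 0 < C) (ε : ℝ) (hε : 0 < ε) :
    ∃ g : ℝ → ℝ, ContDiff ℝ 2 g ∧ HasCompactSupport g ∧
      ((∫ s : ℝ, (deriv g s) ^ 2) + C * ∫ s : ℝ, (g s) ^ 2) ≠ 0 ∧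
      (∫ s : ℝ, (deriv (deriv g) s + A * deriv g s - B * g s) ^ 2) <
        (B ^ 2 / C + ε) * ((∫ s : ℝ, (deriv g s) ^ 2) + C * ∫ s : ℝ, (g s) ^ 2) := by
  -- the bump function
  set φd : ContDiffBump (0:ℝ) := ⟨1, 2, one_pos, one_lt_two⟩ with hφd
  set φ : ℝ → ℝ := fun x => φd x with hφdef
  have hφ : ContDiff ℝ ∞ φ := φd.contDiff
  have hφcs : HasCompactSupport φ := φd.hasCompactSupport
  have hφ1 : ContDiff ℝ ∞ (deriv φ) := (contDiff_infty_iff_deriv.mp hφ).2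
  have hφ2 : ContDiff ℝ ∞ (deriv (deriv φ)) := (contDiff_infty_iff_deriv.mp hφ1).2
  have hφ1cs : HasCompactSupport (deriv φ) := hφcs.deriv
  have hφ2cs : HasCompactSupport (deriv (deriv φ)) := hφ1cs.deriv
  -- base integrals
  set I0 : ℝ := ∫ y : ℝ, (φ y) ^ 2 with hI0
  set I1 : ℝ := ∫ y : ℝ, (deriv φ y) ^ 2 with hI1
  set I2 : ℝ := ∫ y : ℝ, (deriv (deriv φ) y) ^ 2 with hI2
  have hint0 : Integrable (fun y : ℝ => (φ y) ^ 2) :=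
    ((hφ.continuous.pow 2)).integrable_of_hasCompactSupport (hφcs.comp_left (g := fun x : ℝ => x ^ 2) (by norm_num) : HasCompactSupport (fun y : ℝ => (φ y) ^ 2))
  have hint1 : Integrable (fun y : ℝ => (deriv φ y) ^ 2) :=
    ((hφ1.continuous.pow 2)).integrable_of_hasCompactSupport (hφ1cs.comp_left (g := fun x : ℝ => x ^ 2) (by norm_num) : HasCompactSupport (fun y : ℝ => (deriv φ y) ^ 2))
  have hint2 : Integrable (fun y : ℝ => (deriv (deriv φ) y) ^ 2) :=
    ((hφ2.continuous.pow 2)).integrable_of_hasCompactSupport (hφ2cs.comp_left (g := fun x : ℝ => x ^ 2) (by norm_num) : HasCompactSupport (fun y : ℝ => (deriv (deriv φ) y) ^ 2))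
  have hI1nonneg : 0 ≤ I1 := integral_nonneg (fun y => sq_nonneg _)
  have hI2nonneg : 0 ≤ I2 := integral_nonneg (fun y => sq_nonneg _)
  -- positivity of I0
  have hI0pos : 0 < I0 := by
    have hone : ∀ y ∈ Metric.ball (0:ℝ) 1, (φ y) ^ 2 = (1:ℝ) := fun y hy => by
      have : φ y = 1 := φd.one_of_mem_closedBall (Metric.ball_subset_closedBall hy)
      rw [this]; norm_num
    have hball : ∫ y in Metric.ball (0:ℝ) 1, (φ y) ^ 2 = (volume (Metric.ball (0:ℝ) 1)).toReal := by
      rw [setIntegral_congr_fun measurableSet_ball hone, setIntegral_const, smul_eq_mul, mul_one]; rfl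
    have hvol : (volume (Metric.ball (0:ℝ) 1)).toReal = 2 := by
      rw [Real.volume_ball]; norm_num
    have hle : ∫ y in Metric.ball (0:ℝ) 1, (φ y) ^ 2 ≤ I0 :=
      setIntegral_le_integral hint0 (Filter.Eventually.of_forall fun y => sq_nonneg _)
    rw [hball, hvol] at hle; linarith
  -- parameters
  set η : ℝ := ε * C / (2 * (B ^ 2 + 1)) with hηdef
  have hη : 0 < η := by positivity
  set M : ℝ := 2 * (1 + 1 / η) * (I2 + A ^ 2 * I1) with hMdef
  have hM : 0 ≤ M := by positivity
  set r : ℝ := (ε * C / 2 * I0) / (M + 1) with hrdef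
  have hr : 0 < r := by positivity
  set δ : ℝ := min 1 (Real.sqrt r / 2) with hδdef
  have hδ : 0 < δ := lt_min one_pos (by positivity)
  have hδ1 : δ ≤ 1 := min_le_left _ _
  have hδsq : δ ^ 2 * M < ε * C / 2 * I0 := by
    have h1 : δ ≤ Real.sqrt r / 2 := min_le_right _ _
    have h2 : δ ^ 2 ≤ r / 4 := by
      have := Real.sq_sqrt hr.le
      nlinarith [Real.sqrt_nonneg r]
    have h3 : δ ^ 2 * M ≤ r / 4 * M := by nlinarith
    have h4 : r / 4 * M < r * (M + 1) := by nlinarith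
    have h5 : r * (M + 1) = ε * C / 2 * I0 := by
      rw [hrdef, div_mul_cancel₀ _ (by positivity : M + 1 ≠ 0)]
    linarith
  clear_value I0 I1 I2 η M r δ
  clear hδdef hrdef
  -- the function g
  refine ⟨fun s => φ (δ * s), ?_, ?_, ?_⟩
  · exact (φd.contDiff).comp ((contDiff_const.mul contDiff_id))
  · exact hφcs.comp_homeomorph (Homeomorph.mulLeft₀ δ hδ.ne')
  -- derivative computations
  have hφdiff : Differentiable ℝ φ := hφ.differentiable (by simp)
  have hφ1diff : Differentiable ℝ (deriv φ) := hφ1.differentiable (by simp)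
  have hdg : deriv (fun s => φ (δ * s)) = fun s => δ * deriv φ (δ * s) :=
    aux_deriv_scale φ hφdiff δ
  have hddg : deriv (deriv (fun s => φ (δ * s))) = fun s => δ * (δ * deriv (deriv φ) (δ * s)) := by
    rw [hdg]
    have : (fun s => δ * deriv φ (δ * s)) = fun s => δ * (fun s => deriv φ (δ * s)) s := rfl
    rw [this, deriv_const_mul_field', aux_deriv_scale (deriv φ) hφ1diff δ]
  -- integral computations
  have habs : |δ⁻¹| = δ⁻¹ := abs_of_pos (by positivity)
  have hIg : (∫ s : ℝ, ((fun s => φ (δ * s)) s) ^ 2) = δ⁻¹ * I0 := by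
    rw [hI0]
    have := Measure.integral_comp_mul_left (fun y => (φ y) ^ 2) δ
    simpa [habs, smul_eq_mul] using this
  have hIdg : (∫ s : ℝ, (deriv (fun s => φ (δ * s)) s) ^ 2) = δ * I1 := by
    rw [hdg]
    have h1 : (fun s : ℝ => (δ * deriv φ (δ * s)) ^ 2)
        = fun s : ℝ => δ ^ 2 * ((fun y => (deriv φ y) ^ 2) (δ * s)) := by
      funext s; ring
    calc (∫ s : ℝ, (δ * deriv φ (δ * s)) ^ 2)
        = ∫ s : ℝ, δ ^ 2 * ((fun y => (deriv φ y) ^ 2) (δ * s)) := by rw [h1]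
      _ = δ ^ 2 * ∫ s : ℝ, (fun y => (deriv φ y) ^ 2) (δ * s) := integral_const_mul _ _
      _ = δ ^ 2 * (δ⁻¹ * I1) := by
          rw [Measure.integral_comp_mul_left (fun y => (deriv φ y) ^ 2) δ, habs, smul_eq_mul,
            ← hI1]
      _ = δ * I1 := by field_simp
  -- numerator
  set F : ℝ → ℝ := fun y =>
    (δ ^ 2 * deriv (deriv φ) y + A * δ * deriv φ y - B * φ y) ^ 2 with hFdef
  have hFcont : Continuous F := by
    apply Continuous.pow
    exact ((continuous_const.mul hφ2.continuous).add
      (continuous_const.mul hφ1.continuous)).sub (continuous_const.mul hφ.continuous)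
  have hFcs : HasCompactSupport F := by
    have h1 : HasCompactSupport (fun y =>
        δ ^ 2 * deriv (deriv φ) y + A * δ * deriv φ y - B * φ y) := by
      have hsub : Function.support (fun y =>
          δ ^ 2 * deriv (deriv φ) y + A * δ * deriv φ y - B * φ y) ⊆
          tsupport (deriv (deriv φ)) ∪ tsupport (deriv φ) ∪ tsupport φ := by
        intro x hx
        by_contra hmem
        simp only [Set.mem_union, not_or] at hmem
        have e2 := image_eq_zero_of_notMem_tsupport hmem.1.1
        have e1 := image_eq_zero_of_notMem_tsupport hmem.1.2
        have e0 := image_eq_zero_of_notMem_tsupport hmem.2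
        simp only [Function.mem_support] at hx
        apply hx; rw [e2, e1, e0]; ring
      exact IsCompact.of_isClosed_subset ((hφ2cs.union hφ1cs).union hφcs) isClosed_closure
        (closure_minimal hsub
          (((isClosed_tsupport _).union (isClosed_tsupport _)).union (isClosed_tsupport _)))
    exact h1.comp_left (g := fun x : ℝ => x ^ 2) (by norm_num)
  have hFint : Integrable F := hFcont.integrable_of_hasCompactSupport hFcs
  have hnum : (∫ s : ℝ, (deriv (deriv (fun s => φ (δ * s))) s
      + A * deriv (fun s => φ (δ * s)) s - B * (fun s => φ (δ * s)) s) ^ 2) = δ⁻¹ * ∫ y, F y := by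
    rw [hddg, hdg]
    have h1 : (fun s : ℝ => (δ * (δ * deriv (deriv φ) (δ * s)) + A * (δ * deriv φ (δ * s))
        - B * φ (δ * s)) ^ 2) = fun s : ℝ => F (δ * s) := by
      funext s; rw [hFdef]; ring_nf
    calc (∫ s : ℝ, (δ * (δ * deriv (deriv φ) (δ * s)) + A * (δ * deriv φ (δ * s))
          - B * φ (δ * s)) ^ 2) = ∫ s : ℝ, F (δ * s) := by rw [h1]
      _ = δ⁻¹ * ∫ y, F y := by rw [Measure.integral_comp_mul_left F δ, habs, smul_eq_mul]
  -- bound on ∫ F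
  set G : ℝ → ℝ := fun y => (1 + η) * (B * φ y) ^ 2
    + 2 * (1 + 1 / η) * ((δ ^ 2 * deriv (deriv φ) y) ^ 2 + (A * δ * deriv φ y) ^ 2) with hGdef
  have hGint : Integrable G := by
    apply Integrable.add
    · have : (fun y => (1 + η) * (B * φ y) ^ 2) = fun y => ((1 + η) * B ^ 2) * (φ y) ^ 2 := by
        funext y; ring
      rw [this]; exact hint0.const_mul _
    · have : (fun y => 2 * (1 + 1 / η) * ((δ ^ 2 * deriv (deriv φ) y) ^ 2
          + (A * δ * deriv φ y) ^ 2)) = fun y =>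
          (2 * (1 + 1 / η) * δ ^ 4) * (deriv (deriv φ) y) ^ 2
          + (2 * (1 + 1 / η) * (A * δ) ^ 2) * (deriv φ y) ^ 2 := by
        funext y; ring
      rw [this]; exact (hint2.const_mul _).add (hint1.const_mul _)
  have hFG : ∀ y, F y ≤ G y := by
    intro y
    rw [hFdef, hGdef]
    exact aux_sq_ineq η (δ ^ 2 * deriv (deriv φ) y) (A * δ * deriv φ y) (B * φ y) hη
  have hIF : (∫ y, F y) ≤ (1 + η) * B ^ 2 * I0
      + 2 * (1 + 1 / η) * (δ ^ 4 * I2 + A ^ 2 * δ ^ 2 * I1) := by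
    have h1 : (∫ y, F y) ≤ ∫ y, G y := integral_mono hFint hGint hFG
    have h2 : (∫ y, G y) = (1 + η) * B ^ 2 * I0
        + 2 * (1 + 1 / η) * (δ ^ 4 * I2 + A ^ 2 * δ ^ 2 * I1) := by
      have hGeq : G = fun y => ((1 + η) * B ^ 2) * (φ y) ^ 2
          + ((2 * (1 + 1 / η) * δ ^ 4) * (deriv (deriv φ) y) ^ 2
          + (2 * (1 + 1 / η) * (A * δ) ^ 2) * (deriv φ y) ^ 2) := by
        funext y; rw [hGdef]; ring
      have ha : Integrable (fun y : ℝ => (2 * (1 + 1 / η) * δ ^ 4) * (deriv (deriv φ) y) ^ 2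
          + (2 * (1 + 1 / η) * (A * δ) ^ 2) * (deriv φ y) ^ 2) :=
        (hint2.const_mul _).add (hint1.const_mul _)
      rw [hGeq, integral_add (hint0.const_mul _) ha,
        integral_add (hint2.const_mul _) (hint1.const_mul _),
        integral_const_mul, integral_const_mul, integral_const_mul]
      rw [← hI0, ← hI1, ← hI2]; ring
    linarith
  -- final arithmetic
  rw [hIg, hIdg, hnum]
  clear_value F G
  clear hFdef hGdef hGint hFG hFcont hFcs
  have hδinv : 0 < δ⁻¹ := by positivity
  constructor
  · have h1 : 0 ≤ δ * I1 := mul_nonneg hδ.le hI1nonneg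
    have h2 : 0 < C * (δ⁻¹ * I0) := mul_pos hC (mul_pos hδinv hI0pos)
    intro hcontra; linarith [hcontra]
  · -- key strict inequality
    have key : (1 + η) * B ^ 2 * I0 + 2 * (1 + 1 / η) * (δ ^ 4 * I2 + A ^ 2 * δ ^ 2 * I1)
        < (B ^ 2 + ε * C) * I0 := by
      have hεC : 0 < ε * C := mul_pos hε hC
      have hterm1 : η * B ^ 2 * I0 < ε * C / 2 * I0 := by
        have hlt : η * B ^ 2 < ε * C / 2 := by
          rw [hηdef]
          have hkey : ε * C / (2 * (B ^ 2 + 1)) * B ^ 2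
              < ε * C / (2 * (B ^ 2 + 1)) * (B ^ 2 + 1) :=
            mul_lt_mul_of_pos_left (by linarith) (by positivity)
          have heq : ε * C / (2 * (B ^ 2 + 1)) * (B ^ 2 + 1) = ε * C / 2 := by
            field_simp
          linarith
        exact mul_lt_mul_of_pos_right hlt hI0pos
      have hterm2 : 2 * (1 + 1 / η) * (δ ^ 4 * I2 + A ^ 2 * δ ^ 2 * I1) ≤ δ ^ 2 * M := by
        rw [hMdef]
        have h4 : δ ^ 4 ≤ δ ^ 2 := pow_le_pow_of_le_one hδ.le hδ1 (by norm_num)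
        have hpos : (0:ℝ) ≤ 2 * (1 + 1 / η) := by positivity
        have hterm : 0 ≤ (2 * (1 + 1 / η)) * ((δ ^ 2 - δ ^ 4) * I2) :=
          mul_nonneg hpos (mul_nonneg (by linarith) hI2nonneg)
        have heq : δ ^ 2 * (2 * (1 + 1 / η) * (I2 + A ^ 2 * I1))
            - 2 * (1 + 1 / η) * (δ ^ 4 * I2 + A ^ 2 * δ ^ 2 * I1)
            = (2 * (1 + 1 / η)) * ((δ ^ 2 - δ ^ 4) * I2) := by ring
        linarith
      have hexp : (1 + η) * B ^ 2 * I0 = B ^ 2 * I0 + η * B ^ 2 * I0 := by ring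
      linarith
    have hden : (B ^ 2 / C + ε) * (δ * I1 + C * (δ⁻¹ * I0))
        ≥ (B ^ 2 / C + ε) * (C * (δ⁻¹ * I0)) := by
      have h1 : 0 < B ^ 2 / C + ε := by
        have : 0 ≤ B ^ 2 / C := div_nonneg (sq_nonneg B) hC.le
        linarith
      have h2 : 0 ≤ δ * I1 := mul_nonneg hδ.le hI1nonneg
      exact mul_le_mul_of_nonneg_left (by linarith) h1.le
    have hden2 : (B ^ 2 / C + ε) * (C * (δ⁻¹ * I0)) = δ⁻¹ * ((B ^ 2 + ε * C) * I0) := by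
      field_simp
    have hnum2 : δ⁻¹ * (∫ y, F y) < δ⁻¹ * ((B ^ 2 + ε * C) * I0) := by
      apply mul_lt_mul_of_pos_left _ hδinv
      linarith
    rw [hden2] at hden
    linarith
end
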